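/- arXiv:1612.03768 — 3 statements merged into one kernel-verified Lean document; each statement's English description precedes it below -/
import Mathlib

section
/- Let n be a positive integer and (x, y, z) a positive integral solution of x^n - y^n = z^{n+1}. Let d = gcd(x, y, z) and (a, b, c) = (x/d, y/d, z/d). Then (a, b, c) is a relatively prime n-powerful triple with t_n(a, b, c) = d, and (x, y, z) = (a·d, b·d, c·d). -/
/-
Dividing a solution of x^n - y^n = z^(n+1) by d = gcd(x, y, z) leaves a relatively prime triple
with a^n - b^n = c^(n+1) d: the left side loses a factor d^n, the right side d^(n+1).
-/

theorem gcd_div_gcd_div_gcd_three {x y z : ℕ} (h : 0 < Nat.gcd x (Nat.gcd y z)) :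
    Nat.gcd (x / Nat.gcd x (Nat.gcd y z))
      (Nat.gcd (y / Nat.gcd x (Nat.gcd y z)) (z / Nat.gcd x (Nat.gcd y z))) = 1 := by
  have hy : Nat.gcd x (Nat.gcd y z) ∣ y := (Nat.gcd_dvd_right _ _).trans (Nat.gcd_dvd_left _ _)
  have hz : Nat.gcd x (Nat.gcd y z) ∣ z := (Nat.gcd_dvd_right _ _).trans (Nat.gcd_dvd_right _ _)
  rw [Nat.gcd_div hy hz, Nat.gcd_div (Nat.gcd_dvd_left _ _) (Nat.gcd_dvd_right _ _),
    Nat.div_self h]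

theorem pow_sub_pow_eq_mul_of_scaled {n a b c d : ℕ} (hd : 0 < d)
    (h : (a * d) ^ n - (b * d) ^ n = (c * d) ^ (n + 1)) :
    a ^ n - b ^ n = c ^ (n + 1) * d := by
  refine Nat.eq_of_mul_eq_mul_right (pow_pos hd n) ?_
  calc (a ^ n - b ^ n) * d ^ n = (a * d) ^ n - (b * d) ^ n := by
        rw [Nat.sub_mul, mul_pow, mul_pow]
    _ = c ^ (n + 1) * d * d ^ n := by rw [h, mul_pow, pow_succ d]; ring

theorem stmt_7_general (n x y z : ℕ) (hx : 0 < x) (hy : 0 < y) (hz : 0 < z)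
    (h : x ^ n - y ^ n = z ^ (n + 1))
    (d a b c : ℕ) (hd : d = Nat.gcd x (Nat.gcd y z))
    (hab : a = x / d) (hbb : b = y / d) (hcb : c = z / d) :
    0 < a ∧ 0 < b ∧ 0 < c ∧ b < a ∧ c ^ (n + 1) ∣ a ^ n - b ^ n ∧
    Nat.gcd a (Nat.gcd b c) = 1 ∧ (a ^ n - b ^ n) / c ^ (n + 1) = d ∧
    x = a * d ∧ y = b * d ∧ z = c * d := by
  have hd0 : 0 < d := hd ▸ Nat.gcd_pos_of_pos_left _ hx
  have hxad : x = a * d := by rw [hab, Nat.div_mul_cancel (hd ▸ Nat.gcd_dvd_left _ _)]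
  have hybd : y = b * d := by
    rw [hbb, Nat.div_mul_cancel (hd ▸ (Nat.gcd_dvd_right _ _).trans (Nat.gcd_dvd_left _ _))]
  have hzcd : z = c * d := by
    rw [hcb, Nat.div_mul_cancel (hd ▸ (Nat.gcd_dvd_right _ _).trans (Nat.gcd_dvd_right _ _))]
  have hc : 0 < c := Nat.pos_of_mul_pos_right (hzcd ▸ hz)
  have key : a ^ n - b ^ n = c ^ (n + 1) * d :=
    pow_sub_pow_eq_mul_of_scaled hd0 (hxad ▸ hybd ▸ hzcd ▸ h)
  have hba : b < a := by
    have : 0 < a ^ n - b ^ n := key ▸ Nat.mul_pos (pow_pos hc _) hd0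
    exact lt_of_pow_lt_pow_left₀ n (Nat.zero_le a) (Nat.sub_pos_iff_lt.mp this)
  refine ⟨Nat.pos_of_mul_pos_right (hxad ▸ hx), Nat.pos_of_mul_pos_right (hybd ▸ hy), hc, hba,
    ⟨d, key⟩, ?_, ?_, hxad, hybd, hzcd⟩
  · subst hab hbb hcb hd
    exact gcd_div_gcd_div_gcd_three hd0
  · rw [key, Nat.mul_div_cancel_left _ (pow_pos hc _)]

theorem stmt_7 (n x y z : ℕ) (hn : 0 < n) (hx : 0 < x) (hy : 0 < y) (hz : 0 < z)
    (h : x ^ n - y ^ n = z ^ (n + 1))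
    (d a b c : ℕ) (hd : d = Nat.gcd x (Nat.gcd y z))
    (hab : a = x / d) (hbb : b = y / d) (hcb : c = z / d) :
    0 < a ∧ 0 < b ∧ 0 < c ∧ b < a ∧ c ^ (n + 1) ∣ a ^ n - b ^ n ∧
    Nat.gcd a (Nat.gcd b c) = 1 ∧ (a ^ n - b ^ n) / c ^ (n + 1) = d ∧
    x = a * d ∧ y = b * d ∧ z = c * d :=
  stmt_7_general n x y z hx hy hz h d a b c hd hab hbb hcb
end

section
/- Let n be a positive integer. If (a, b, c) and (a₁, b₁, c₁) are relatively prime n-powerful triples such that (a·t, b·t, c·t) = (a₁·t', b₁·t', c₁·t'), where t = t_n(a,b,c) and t' = t_n(a₁,b₁,c₁), then (a, b, c) = (a₁, b₁, c₁). -/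
theorem stmt_8 (n a b c a₁ b₁ c₁ t t' : ℕ) (hn : 0 < n)
    (ha : 0 < a) (hb : 0 < b) (hc : 0 < c)
    (ha₁ : 0 < a₁) (hb₁ : 0 < b₁) (hc₁ : 0 < c₁)
    (hab : b < a) (hab₁ : b₁ < a₁)
    (hdvd : c ^ (n + 1) ∣ a ^ n - b ^ n)
    (hdvd₁ : c₁ ^ (n + 1) ∣ a₁ ^ n - b₁ ^ n)
    (hcop : Nat.gcd a (Nat.gcd b c) = 1)
    (hcop₁ : Nat.gcd a₁ (Nat.gcd b₁ c₁) = 1)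
    (ht : t = (a ^ n - b ^ n) / c ^ (n + 1))
    (ht' : t' = (a₁ ^ n - b₁ ^ n) / c₁ ^ (n + 1))
    (heq : (a * t, b * t, c * t) = (a₁ * t', b₁ * t', c₁ * t')) :
    (a, b, c) = (a₁, b₁, c₁) := by
  obtain ⟨h1, h2, h3⟩ : a * t = a₁ * t' ∧ b * t = b₁ * t' ∧ c * t = c₁ * t' := by
    simpa [Prod.ext_iff] using heq
  have hpos : 0 < a ^ n - b ^ n := by
    have := Nat.pow_lt_pow_left hab hn.ne'
    omega
  have htpos : 0 < t := by
    rw [ht]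
    exact Nat.div_pos (Nat.le_of_dvd hpos hdvd) (pow_pos hc _)
  have hgt : Nat.gcd (a * t) (Nat.gcd (b * t) (c * t)) = t := by
    rw [Nat.gcd_mul_right, Nat.gcd_mul_right, hcop, one_mul]
  have hgt' : Nat.gcd (a₁ * t') (Nat.gcd (b₁ * t') (c₁ * t')) = t' := by
    rw [Nat.gcd_mul_right, Nat.gcd_mul_right, hcop₁, one_mul]
  have htt : t = t' := by rw [← hgt, h1, h2, h3, hgt']
  subst htt
  have := Nat.eq_of_mul_eq_mul_right htpos h1
  have := Nat.eq_of_mul_eq_mul_right htpos h2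
  have := Nat.eq_of_mul_eq_mul_right htpos h3
  simp_all
end

section
/- For every positive integer n, there is a bijection between the set of positive integral solutions of x^n - y^n = z^{n+1} and the set of relatively prime n-powerful triples, given by sending a triple (a, b, c) with t = (a^n - b^n)/c^{n+1} to (a·t, b·t, c·t). -/
private lemma key_aux (n a b c : ℕ) (hn : 0 < n) (hc : 0 < c) (hba : b < a)
    (hdvd : c ^ (n + 1) ∣ a ^ n - b ^ n) :
    0 < (a ^ n - b ^ n) / c ^ (n + 1) ∧
      a ^ n - b ^ n = c ^ (n + 1) * ((a ^ n - b ^ n) / c ^ (n + 1)) := by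
  have hab : b ^ n < a ^ n := Nat.pow_lt_pow_left hba hn.ne'
  have h2 : a ^ n - b ^ n = c ^ (n + 1) * ((a ^ n - b ^ n) / c ^ (n + 1)) :=
    (Nat.mul_div_cancel' hdvd).symm
  refine ⟨?_, h2⟩
  rcases Nat.eq_zero_or_pos ((a ^ n - b ^ n) / c ^ (n + 1)) with h | h
  · rw [h, Nat.mul_zero] at h2; omega
  · exact h

theorem stmt_9 (n : ℕ) (hn : 0 < n) :
    Set.BijOn
      (fun p : ℕ × ℕ × ℕ =>
        ((p.1 * ((p.1 ^ n - p.2.1 ^ n) / p.2.2 ^ (n + 1)),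
          p.2.1 * ((p.1 ^ n - p.2.1 ^ n) / p.2.2 ^ (n + 1)),
          p.2.2 * ((p.1 ^ n - p.2.1 ^ n) / p.2.2 ^ (n + 1))) : ℕ × ℕ × ℕ))
      {p : ℕ × ℕ × ℕ | 0 < p.1 ∧ 0 < p.2.1 ∧ 0 < p.2.2 ∧ p.2.1 < p.1 ∧
        p.2.2 ^ (n + 1) ∣ p.1 ^ n - p.2.1 ^ n ∧
        Nat.gcd p.1 (Nat.gcd p.2.1 p.2.2) = 1}
      {p : ℕ × ℕ × ℕ | 0 < p.1 ∧ 0 < p.2.1 ∧ 0 < p.2.2 ∧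
        p.1 ^ n - p.2.1 ^ n = p.2.2 ^ (n + 1)} := by
  refine ⟨?_, ?_, ?_⟩
  · -- MapsTo
    rintro ⟨a, b, c⟩ ⟨ha, hb, hc, hba, hdvd, hgcd⟩
    obtain ⟨htpos, ht⟩ := key_aux n a b c hn hc hba hdvd
    set t := (a ^ n - b ^ n) / c ^ (n + 1) with htdef
    refine ⟨Nat.mul_pos ha htpos, Nat.mul_pos hb htpos, Nat.mul_pos hc htpos, ?_⟩
    show (a * t) ^ n - (b * t) ^ n = (c * t) ^ (n + 1)
    rw [mul_pow, mul_pow, mul_pow, ← Nat.sub_mul, ht]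
    ring
  · -- InjOn
    rintro ⟨a, b, c⟩ ⟨ha, hb, hc, hba, hdvd, hgcd⟩ ⟨a', b', c'⟩
      ⟨ha', hb', hc', hba', hdvd', hgcd'⟩ heq
    obtain ⟨htpos, ht⟩ := key_aux n a b c hn hc hba hdvd
    obtain ⟨htpos', ht'⟩ := key_aux n a' b' c' hn hc' hba' hdvd'
    simp only [Prod.mk.injEq] at heq
    obtain ⟨h1, h2, h3⟩ := heq
    set t := (a ^ n - b ^ n) / c ^ (n + 1) with htdef
    set t' := (a' ^ n - b' ^ n) / c' ^ (n + 1) with htdef'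
    have hg : Nat.gcd (a * t) (Nat.gcd (b * t) (c * t)) = t := by
      rw [Nat.gcd_mul_right, Nat.gcd_mul_right, hgcd, one_mul]
    have hg' : Nat.gcd (a' * t') (Nat.gcd (b' * t') (c' * t')) = t' := by
      rw [Nat.gcd_mul_right, Nat.gcd_mul_right, hgcd', one_mul]
    have htt : t = t' := by rw [← hg, ← hg', h1, h2, h3]
    rw [htt] at h1 h2 h3
    have ea : a = a' := Nat.eq_of_mul_eq_mul_right htpos' h1
    have eb : b = b' := Nat.eq_of_mul_eq_mul_right htpos' h2
    have ec : c = c' := Nat.eq_of_mul_eq_mul_right htpos' h3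
    rw [Prod.mk.injEq, Prod.mk.injEq]
    exact ⟨ea, eb, ec⟩
  · -- SurjOn
    rintro ⟨x, y, z⟩ ⟨hx, hy, hz, heq⟩
    dsimp only at hx hy hz heq
    set g := Nat.gcd x (Nat.gcd y z) with hgdef
    have hgx : g ∣ x := Nat.gcd_dvd_left _ _
    have hgy : g ∣ y := (Nat.gcd_dvd_right _ _).trans (Nat.gcd_dvd_left _ _)
    have hgz : g ∣ z := (Nat.gcd_dvd_right _ _).trans (Nat.gcd_dvd_right _ _)
    have hg : 0 < g := Nat.gcd_pos_of_pos_left _ hx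
    set a := x / g with hadef
    set b := y / g with hbdef
    set c := z / g with hcdef
    have hxa : a * g = x := Nat.div_mul_cancel hgx
    have hyb : b * g = y := Nat.div_mul_cancel hgy
    have hzc : c * g = z := Nat.div_mul_cancel hgz
    have ha : 0 < a := Nat.div_pos (Nat.le_of_dvd hx hgx) hg
    have hb : 0 < b := Nat.div_pos (Nat.le_of_dvd hy hgy) hg
    have hc : 0 < c := Nat.div_pos (Nat.le_of_dvd hz hgz) hg
    have hyx : y < x := by
      have hzn : 0 < z ^ (n + 1) := pow_pos hz _
      have hpow : y ^ n < x ^ n := by omega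
      exact lt_of_pow_lt_pow_left₀ n (Nat.zero_le _) hpow
    have hba : b < a := by
      rw [← hxa, ← hyb] at hyx
      exact Nat.lt_of_mul_lt_mul_right hyx
    -- key equation
    have hkey : a ^ n - b ^ n = c ^ (n + 1) * g := by
      have h1 : (a ^ n - b ^ n) * g ^ n = c ^ (n + 1) * g * g ^ n := by
        rw [Nat.sub_mul, ← mul_pow, ← mul_pow, hxa, hyb, heq, ← hzc]
        ring
      exact Nat.eq_of_mul_eq_mul_right (pow_pos hg n) h1
    have hdvd : c ^ (n + 1) ∣ a ^ n - b ^ n := ⟨g, hkey⟩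
    have hgcd1 : Nat.gcd a (Nat.gcd b c) = 1 := by
      have : Nat.gcd a (Nat.gcd b c) * g = 1 * g := by
        rw [one_mul, ← Nat.gcd_mul_right, ← Nat.gcd_mul_right, hxa, hyb, hzc]
      exact Nat.eq_of_mul_eq_mul_right hg this
    have htg : (a ^ n - b ^ n) / c ^ (n + 1) = g := by
      rw [hkey, Nat.mul_div_cancel_left _ (pow_pos hc _)]
    refine ⟨(a, b, c), ⟨ha, hb, hc, hba, hdvd, hgcd1⟩, ?_⟩
    show (a * ((a ^ n - b ^ n) / c ^ (n + 1)),
          b * ((a ^ n - b ^ n) / c ^ (n + 1)),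
          c * ((a ^ n - b ^ n) / c ^ (n + 1))) = (x, y, z)
    rw [htg, hxa, hyb, hzc]
end
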